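/- Let R be a unital ring and let X : ℝᵒᵖ → C(Mod R) be a functor to the category of (unbounded) cochain complexes of R-modules, writing X_s = X(s) and X_s^k for its degree-k component. Assume: (1) for every k ∈ ℤ and all reals r ≤ s, the map X_s^k → X_r^k is surjective; (2) for every k ∈ ℤ and every s ∈ ℝ, the natural map X_s^k → lim_{r<s} X_r^k is an isomorphism; (3) for every j ∈ ℤ and every s ∈ ℝ, the natural map colim_{t>s} H^j(X_t) → H^j(X_s) is an isomorphism. Then for every j ∈ ℤ and all reals r ≤ s, the map H^j(X_s) → H^j(X_r) is an isomorphism; that is, the functor s ↦ H^j(X_s) is constant. -/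

import Mathlib

open CategoryTheory CategoryTheory.Limits Opposite

/-- The restriction of a functor `X : ℝᵒᵖ ⥤ C` to the (opposite of the) ordered set
`{t : ℝ // s < t}`. -/
def restrictGT {C : Type*} [Category C] (X : ℝᵒᵖ ⥤ C) (s : ℝ) :
    ({t : ℝ // s < t})ᵒᵖ ⥤ C :=
  (Monotone.functor (f := fun t : {t : ℝ // s < t} => (t : ℝ)) fun _ _ h => h).op ⋙ X

/-- The canonical cocone on `restrictGT X s` with apex `X s`, whose legs are the
transition maps `X t → X s` for `t > s`. -/
def coconeGT {C : Type*} [Category C] (X : ℝᵒᵖ ⥤ C) (s : ℝ) : Cocone (restrictGT X s) where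
  pt := X.obj (op s)
  ι :=
    { app := fun t => X.map (homOfLE t.unop.2.le).op
      naturality := fun a b f => by
        dsimp [restrictGT]
        erw [Category.comp_id, ← X.map_comp]
        try rfl }

/-- The restriction of a functor `X : ℝᵒᵖ ⥤ C` to the (opposite of the) ordered set
`{r : ℝ // r < s}`. -/
def restrictLT {C : Type*} [Category C] (X : ℝᵒᵖ ⥤ C) (s : ℝ) :
    ({r : ℝ // r < s})ᵒᵖ ⥤ C :=
  (Monotone.functor (f := fun r : {r : ℝ // r < s} => (r : ℝ)) fun _ _ h => h).op ⋙ X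

/-- The canonical cone on `restrictLT X s` with apex `X s`, whose legs are the
transition maps `X s → X r` for `r < s`. -/
def coneLT {C : Type*} [Category C] (X : ℝᵒᵖ ⥤ C) (s : ℝ) : Cone (restrictLT X s) where
  pt := X.obj (op s)
  π :=
    { app := fun r => X.map (homOfLE r.unop.2.le).op
      naturality := fun a b f => by
        dsimp [restrictLT]
        erw [Category.id_comp, ← X.map_comp]
        try rfl }

/-- The functor `s ↦ X_s^k` of degree-`k` components. -/
def componentFunctor {R : Type} [Ring R]
    (X : ℝᵒᵖ ⥤ CochainComplex (ModuleCat R) ℤ) (k : ℤ) : ℝᵒᵖ ⥤ ModuleCat R :=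
  X ⋙ HomologicalComplex.eval (ModuleCat R) (ComplexShape.up ℤ) k

/-- The functor `s ↦ H^j(X_s)`. -/
noncomputable def cohomologyFunctor {R : Type} [Ring R]
    (X : ℝᵒᵖ ⥤ CochainComplex (ModuleCat R) ℤ) (j : ℤ) : ℝᵒᵖ ⥤ ModuleCat R :=
  X ⋙ HomologicalComplex.homologyFunctor (ModuleCat R) (ComplexShape.up ℤ) j


namespace KSdev

variable {R : Type} [Ring R]

section HomologyAPI

variable (K : CochainComplex (ModuleCat R) ℤ) (j : ℤ)

lemma rel_next : (ComplexShape.up ℤ).Rel j (j+1) := by simp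
lemma rel_prev : (ComplexShape.up ℤ).Rel (j-1) j := by simp

lemma modcat_inj {M N : ModuleCat R} (f : M ⟶ N) [Mono f] : Function.Injective f :=
  (ModuleCat.mono_iff_injective _).1 inferInstance

lemma mem_ker_iff (x : K.X j) : x ∈ LinearMap.ker (K.sc j).g.hom ↔ K.d j (j+1) x = 0 := by
  have hinj : Function.Injective ((K.xNextIso (rel_next j)).inv) := modcat_inj _
  constructor
  · intro hx
    have h2 : K.dFrom j x = 0 := hx
    rw [K.dFrom_eq (rel_next j)] at h2
    apply hinj
    rw [map_zero]
    exact h2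
  · intro hx
    show K.dFrom j x = 0
    rw [K.dFrom_eq (rel_next j)]
    show (K.xNextIso (rel_next j)).inv (K.d j (j+1) x) = 0
    rw [hx, map_zero]

/-- The homology class of a cocycle. -/
noncomputable def mkH (x : K.X j) (hx : K.d j (j+1) x = 0) : K.homology j :=
  (K.sc j).moduleCatHomologyIso.inv
    (Submodule.Quotient.mk (⟨x, (mem_ker_iff K j x).2 hx⟩ : LinearMap.ker (K.sc j).g.hom))

/-- The cycle defined by a cocycle. -/
noncomputable def mkCyc (x : K.X j) (hx : K.d j (j+1) x = 0) : K.cycles j :=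
  (K.sc j).moduleCatCyclesIso.inv ⟨x, (mem_ker_iff K j x).2 hx⟩

lemma iCycles_mkCyc (x : K.X j) (hx : K.d j (j+1) x = 0) :
    K.iCycles j (mkCyc K j x hx) = x :=
  (K.sc j).moduleCatCyclesIso_inv_iCycles_apply ⟨x, (mem_ker_iff K j x).2 hx⟩

lemma mkH_eq_homologyπ (x : K.X j) (hx : K.d j (j+1) x = 0) :
    mkH K j x hx = K.homologyπ j (mkCyc K j x hx) :=
  ((K.sc j).moduleCatCyclesIso_inv_π_apply ⟨x, (mem_ker_iff K j x).2 hx⟩).symm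

lemma mkH_surjective (h : K.homology j) :
    ∃ (x : K.X j) (hx : K.d j (j+1) x = 0), h = mkH K j x hx := by
  obtain ⟨q, hq⟩ : ∃ q, (K.sc j).moduleCatHomologyIso.inv q = h :=
    ⟨(K.sc j).moduleCatHomologyIso.hom h, (K.sc j).moduleCatHomologyIso.hom_inv_id_apply h⟩
  obtain ⟨z, hz⟩ := Submodule.Quotient.mk_surjective _ q
  refine ⟨z.1, (mem_ker_iff K j z.1).1 z.2, ?_⟩
  rw [← hq, ← hz]
  rfl

lemma mkH_eq_iff (x y : K.X j) (hx : K.d j (j+1) x = 0) (hy : K.d j (j+1) y = 0) :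
    mkH K j x hx = mkH K j y hy ↔ ∃ w : K.X (j-1), K.d (j-1) j w = x - y := by
  have hinj : Function.Injective ((K.sc j).moduleCatHomologyIso.inv) := modcat_inj _
  rw [mkH, mkH]
  constructor
  · intro hxy
    have h2 := hinj hxy
    replace h2 := (Submodule.Quotient.eq _).1 h2
    obtain ⟨w, hw⟩ := h2
    refine ⟨(K.xPrevIso (rel_prev j)).hom w, ?_⟩
    have hw1 : (K.sc j).f w = x - y := congrArg Subtype.val hw
    have h3 : K.dTo j w = x - y := hw1
    rw [K.dTo_eq (rel_prev j)] at h3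
    exact h3
  · rintro ⟨w, hw⟩
    congr 1
    refine (Submodule.Quotient.eq _).2 ?_
    refine ⟨(K.xPrevIso (rel_prev j)).inv w, ?_⟩
    apply Subtype.ext
    show K.dTo j ((K.xPrevIso (rel_prev j)).inv w) = x - y
    rw [K.dTo_eq (rel_prev j)]
    show K.d (j-1) j ((K.xPrevIso (rel_prev j)).hom ((K.xPrevIso (rel_prev j)).inv w)) = x - y
    rw [← hw]
    congr 1
    exact (K.xPrevIso (rel_prev j)).inv_hom_id_apply w

lemma mkH_eq_zero_iff (x : K.X j) (hx : K.d j (j+1) x = 0) :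
    mkH K j x hx = 0 ↔ ∃ w : K.X (j-1), K.d (j-1) j w = x := by
  have h0 : mkH K j 0 (by rw [map_zero]) = 0 := by
    rw [mkH]
    have hq : (Submodule.Quotient.mk (⟨(0 : K.X j), (mem_ker_iff K j 0).2 (by rw [map_zero])⟩ :
        LinearMap.ker (K.sc j).g.hom) :
        (LinearMap.ker (K.sc j).g.hom ⧸ LinearMap.range (K.sc j).moduleCatToCycles)) = 0 := by
      rw [Submodule.Quotient.mk_eq_zero]
      exact Submodule.zero_mem _
    exact (congrArg (fun q => (K.sc j).moduleCatHomologyIso.inv q) hq).trans (map_zero _)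
  rw [← h0, mkH_eq_iff]
  simp

variable {K} {L : CochainComplex (ModuleCat R) ℤ} (φ : K ⟶ L)

lemma d_comm (x : K.X j) (k : ℤ) : L.d j k (φ.f j x) = φ.f k (K.d j k x) := by
  have h := ConcreteCategory.congr_hom (φ.comm j k) x
  exact h

lemma homologyMap_mkH (x : K.X j) (hx : K.d j (j+1) x = 0) :
    HomologicalComplex.homologyMap φ j (mkH K j x hx) =
      mkH L j (φ.f j x) (by rw [d_comm, hx, map_zero]) := by
  rw [mkH_eq_homologyπ, mkH_eq_homologyπ]
  have h1 : HomologicalComplex.homologyMap φ j (K.homologyπ j (mkCyc K j x hx)) =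
      L.homologyπ j (HomologicalComplex.cyclesMap φ j (mkCyc K j x hx)) :=
    ConcreteCategory.congr_hom (HomologicalComplex.homologyπ_naturality φ j) (mkCyc K j x hx)
  rw [h1]
  congr 1
  apply modcat_inj (L.iCycles j)
  rw [iCycles_mkCyc]
  have h2 : L.iCycles j (HomologicalComplex.cyclesMap φ j (mkCyc K j x hx)) =
      φ.f j (K.iCycles j (mkCyc K j x hx)) :=
    ConcreteCategory.congr_hom (HomologicalComplex.cyclesMap_i φ j) (mkCyc K j x hx)
  rw [h2, iCycles_mkCyc]

end HomologyAPI

section FunctorSetup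

variable (X : ℝᵒᵖ ⥤ CochainComplex (ModuleCat R) ℤ)

/-- Degree-`k` component of `X_s`. -/
abbrev Ob (s : ℝ) (k : ℤ) : ModuleCat R := (X.obj (op s)).X k

/-- Differential. -/
abbrev dd (s : ℝ) (k k' : ℤ) : Ob X s k ⟶ Ob X s k' := (X.obj (op s)).d k k'

/-- Transition map. -/
abbrev res {r s : ℝ} (h : r ≤ s) (k : ℤ) : Ob X s k ⟶ Ob X r k :=
  (X.map (homOfLE h).op).f k

/-- Cohomology. -/
noncomputable abbrev Hq (s : ℝ) (j : ℤ) : ModuleCat R :=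
  (cohomologyFunctor X j).obj (op s)

/-- Transition on cohomology. -/
noncomputable abbrev hres {r s : ℝ} (h : r ≤ s) (j : ℤ) : Hq X s j ⟶ Hq X r j :=
  (cohomologyFunctor X j).map (homOfLE h).op

lemma res_res {r s t : ℝ} (h1 : r ≤ s) (h2 : s ≤ t) (k : ℤ) (x : Ob X t k) :
    res X h1 k (res X h2 k x) = res X (h1.trans h2) k x := by
  have e : X.map (homOfLE h2).op ≫ X.map (homOfLE h1).op
      = X.map (homOfLE (h1.trans h2)).op := by
    rw [← X.map_comp]
    exact congrArg X.map (Subsingleton.elim _ _)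
  exact ConcreteCategory.congr_hom (congrArg (fun φ : _ ⟶ _ => HomologicalComplex.Hom.f φ k) e) x

lemma res_refl {s : ℝ} (k : ℤ) (x : Ob X s k) : res X (le_refl s) k x = x := by
  have e : X.map (homOfLE (le_refl s)).op = 𝟙 (X.obj (op s)) := by
    rw [show (homOfLE (le_refl s)).op = 𝟙 (op s) from Subsingleton.elim _ _, X.map_id]
  exact ConcreteCategory.congr_hom (congrArg (fun φ : _ ⟶ _ => HomologicalComplex.Hom.f φ k) e) x

lemma res_dd {r s : ℝ} (h : r ≤ s) (k k' : ℤ) (x : Ob X s k) :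
    dd X r k k' (res X h k x) = res X h k' (dd X s k k' x) :=
  d_comm k (X.map (homOfLE h).op) x k'

lemma dd_dd (s : ℝ) (k k' k'' : ℤ) (x : Ob X s k) :
    dd X s k' k'' (dd X s k k' x) = 0 :=
  ConcreteCategory.congr_hom ((X.obj (op s)).d_comp_d k k' k'') x

lemma hres_hres {r s t : ℝ} (h1 : r ≤ s) (h2 : s ≤ t) (j : ℤ) (y : Hq X t j) :
    hres X h1 j (hres X h2 j y) = hres X (h1.trans h2) j y := by
  have e : (cohomologyFunctor X j).map (homOfLE h2).op ≫
      (cohomologyFunctor X j).map (homOfLE h1).op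
      = (cohomologyFunctor X j).map (homOfLE (h1.trans h2)).op := by
    rw [← Functor.map_comp]
    exact congrArg (cohomologyFunctor X j).map (Subsingleton.elim _ _)
  exact ConcreteCategory.congr_hom e y

lemma hres_refl {s : ℝ} (j : ℤ) (y : Hq X s j) : hres X (le_refl s) j y = y := by
  have e : (cohomologyFunctor X j).map (homOfLE (le_refl s)).op
      = 𝟙 (Hq X s j) := by
    rw [show (homOfLE (le_refl s)).op = 𝟙 (op s) from Subsingleton.elim _ _]
    exact (cohomologyFunctor X j).map_id (op s)
  exact ConcreteCategory.congr_hom e y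

/-- The class of a cocycle. -/
noncomputable def cls (s : ℝ) (j : ℤ) (x : Ob X s j) (hx : dd X s j (j+1) x = 0) :
    Hq X s j :=
  mkH (X.obj (op s)) j x hx

lemma cls_surjective (s : ℝ) (j : ℤ) (h : Hq X s j) :
    ∃ (x : Ob X s j) (hx : dd X s j (j+1) x = 0), h = cls X s j x hx :=
  mkH_surjective (X.obj (op s)) j h

lemma cls_eq_iff (s : ℝ) (j : ℤ) (x y : Ob X s j) (hx : dd X s j (j+1) x = 0)
    (hy : dd X s j (j+1) y = 0) :
    cls X s j x hx = cls X s j y hy ↔ ∃ w : Ob X s (j-1), dd X s (j-1) j w = x - y :=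
  mkH_eq_iff (X.obj (op s)) j x y hx hy

lemma cls_eq_zero_iff (s : ℝ) (j : ℤ) (x : Ob X s j) (hx : dd X s j (j+1) x = 0) :
    cls X s j x hx = 0 ↔ ∃ w : Ob X s (j-1), dd X s (j-1) j w = x :=
  mkH_eq_zero_iff (X.obj (op s)) j x hx

lemma hres_cls {r s : ℝ} (h : r ≤ s) (j : ℤ) (x : Ob X s j) (hx : dd X s j (j+1) x = 0) :
    hres X h j (cls X s j x hx) = cls X r j (res X h j x)
      (by rw [res_dd, hx, map_zero]) :=
  homologyMap_mkH j (X.map (homOfLE h).op) x hx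

end FunctorSetup

section Translate

variable (X : ℝᵒᵖ ⥤ CochainComplex (ModuleCat R) ℤ)

lemma res_surjective
    (h1 : ∀ (k : ℤ) (r s : ℝ) (h : r ≤ s),
      Function.Surjective ((componentFunctor X k).map (homOfLE h).op))
    {r s : ℝ} (h : r ≤ s) (k : ℤ) : Function.Surjective (res X h k) :=
  h1 k r s h

section LimTranslate

variable (k : ℤ) (s : ℝ)
  (h2 : IsIso (limit.lift (restrictLT (componentFunctor X k) s)
        (coneLT (componentFunctor X k) s)))

include h2

lemma isLimit_coneLT : Nonempty (IsLimit ((forget (ModuleCat R)).mapCone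
    (coneLT (componentFunctor X k) s))) := by
  haveI : IsIso ((limit.isLimit (restrictLT (componentFunctor X k) s)).lift
      (coneLT (componentFunctor X k) s)) := by
    rw [limit.isLimit_lift]
    exact h2
  exact ⟨isLimitOfPreserves (forget (ModuleCat R))
    (IsLimit.ofPointIso (limit.isLimit (restrictLT (componentFunctor X k) s)))⟩

lemma eq_of_res_lt (x y : Ob X s k)
    (hxy : ∀ (r : ℝ) (hr : r < s), res X hr.le k x = res X hr.le k y) : x = y := by
  obtain ⟨hLimT⟩ := isLimit_coneLT X k s h2
  apply (Types.isLimitEquivSections hLimT).injective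
  apply Subtype.ext
  funext jj
  have hx := Types.isLimitEquivSections_apply hLimT jj x
  have hy := Types.isLimitEquivSections_apply hLimT jj y
  rw [hx, hy]
  exact hxy jj.unop.1 jj.unop.2

lemma exists_of_family (fam : ∀ (r : ℝ), r < s → Ob X r k)
    (hfam : ∀ (r r' : ℝ) (hr : r < s) (hr' : r' < s) (hrr' : r ≤ r'),
      res X hrr' k (fam r' hr') = fam r hr) :
    ∃ x : Ob X s k, ∀ (r : ℝ) (hr : r < s), res X hr.le k x = fam r hr := by
  obtain ⟨hLimT⟩ := isLimit_coneLT X k s h2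
  have hsec : ∀ (a b : ({r : ℝ // r < s})ᵒᵖ) (f : a ⟶ b),
      (restrictLT (componentFunctor X k) s ⋙ forget (ModuleCat R)).map f
        (fam a.unop.1 a.unop.2) = fam b.unop.1 b.unop.2 := by
    intro a b f
    have hba : (b.unop.1 : ℝ) ≤ a.unop.1 := leOfHom f.unop
    have e : (restrictLT (componentFunctor X k) s).map f = res X hba k :=
      congrArg (fun g => (X.map g).f k) (Subsingleton.elim _ _)
    show (restrictLT (componentFunctor X k) s).map f (fam a.unop.1 a.unop.2) = _
    rw [e]
    exact hfam b.unop.1 a.unop.1 b.unop.2 a.unop.2 hba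
  refine ⟨(Types.isLimitEquivSections hLimT).symm ⟨fun jj => fam jj.unop.1 jj.unop.2,
    fun {a b} f => hsec a b f⟩, ?_⟩
  intro r hr
  exact Types.isLimitEquivSections_symm_apply hLimT _ (op (⟨r, hr⟩ : {r : ℝ // r < s}))

end LimTranslate

section ColimTranslate

variable (j : ℤ) (s : ℝ)
  (h3 : IsIso (colimit.desc (restrictGT (cohomologyFunctor X j) s)
        (coconeGT (cohomologyFunctor X j) s)))

include h3

lemma isColimit_coconeGT : Nonempty (IsColimit ((forget (ModuleCat R)).mapCocone
    (coconeGT (cohomologyFunctor X j) s))) := by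
  haveI : IsIso ((colimit.isColimit (restrictGT (cohomologyFunctor X j) s)).desc
      (coconeGT (cohomologyFunctor X j) s)) := by
    rw [colimit.isColimit_desc]
    exact h3
  exact ⟨isColimitOfPreserves (forget (ModuleCat R))
    (IsColimit.ofPointIso (colimit.isColimit (restrictGT (cohomologyFunctor X j) s)))⟩

lemma exists_lift_class (c : Hq X s j) :
    ∃ (t : ℝ) (ht : s < t) (y : Hq X t j), hres X ht.le j y = c := by
  obtain ⟨hCoT⟩ := isColimit_coconeGT X j s h3
  obtain ⟨jj, y, hy⟩ := Types.jointly_surjective _ hCoT c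
  exact ⟨jj.unop.1, jj.unop.2, y, hy⟩

lemma vanish_up (t : ℝ) (hst : s < t) (y : Hq X t j)
    (hy : hres X hst.le j y = 0) :
    ∃ (u : ℝ) (hsu : s < u) (hut : u ≤ t), hres X hut j y = 0 := by
  obtain ⟨hCoT⟩ := isColimit_coconeGT X j s h3
  have heq : ((forget (ModuleCat R)).mapCocone
        (coconeGT (cohomologyFunctor X j) s)).ι.app (op (⟨t, hst⟩ : {t : ℝ // s < t})) y =
      ((forget (ModuleCat R)).mapCocone
        (coconeGT (cohomologyFunctor X j) s)).ι.app (op (⟨t, hst⟩ : {t : ℝ // s < t})) 0 := by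
    show hres X hst.le j y = hres X hst.le j 0
    rw [hy, map_zero]
  replace heq := (Types.FilteredColimit.isColimit_eq_iff _ hCoT).1 heq
  obtain ⟨kk, f, g, hfg⟩ := heq
  have hut : (kk.unop.1 : ℝ) ≤ t := leOfHom f.unop
  have e : (restrictGT (cohomologyFunctor X j) s).map f = hres X hut j :=
    congrArg (fun g => (cohomologyFunctor X j).map g) (Subsingleton.elim _ _)
  refine ⟨kk.unop.1, kk.unop.2, hut, ?_⟩
  have : (restrictGT (cohomologyFunctor X j) s).map f y
      = (restrictGT (cohomologyFunctor X j) s).map g 0 := hfg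
  rw [map_zero, e] at this
  exact this

end ColimTranslate

end Translate

section Seq

/-- Approximating sequence from below. -/
noncomputable def seq (c : ℝ) (n : ℕ) : ℝ := c - 1/(n+1)

lemma seq_lt (c : ℝ) (n : ℕ) : seq c n < c := by
  have : (0 : ℝ) < 1/(n+1) := by positivity
  simp only [seq]
  linarith

lemma seq_mono (c : ℝ) {n m : ℕ} (h : n ≤ m) : seq c n ≤ seq c m := by
  have h1 : (1 : ℝ)/(m+1) ≤ 1/(n+1) := by
    apply one_div_le_one_div_of_le
    · positivity
    · have := (Nat.cast_le (α := ℝ)).2 h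
      linarith
  simp only [seq]
  linarith

lemma exists_seq_ge (c u : ℝ) (h : u < c) : ∃ n : ℕ, u ≤ seq c n := by
  obtain ⟨n, hn⟩ := exists_nat_one_div_lt (show (0:ℝ) < c - u by linarith)
  exact ⟨n, by simp only [seq]; linarith⟩

lemma exists_chain {α : ℕ → Type} (Q : ∀ n, α n → Prop) (Rl : ∀ n, α n → α (n+1) → Prop)
    (h0 : ∃ a, Q 0 a) (hstep : ∀ n a, Q n a → ∃ b, Q (n+1) b ∧ Rl n a b) :
    ∃ f : ∀ n, α n, (∀ n, Q n (f n)) ∧ (∀ n, Rl n (f n) (f (n+1))) := by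
  let g : ∀ n, {a : α n // Q n a} := fun n => Nat.rec
    ⟨h0.choose, h0.choose_spec⟩
    (fun m p => ⟨(hstep m p.1 p.2).choose, (hstep m p.1 p.2).choose_spec.1⟩) n
  refine ⟨fun n => (g n).1, fun n => (g n).2, fun n => ?_⟩
  exact (hstep n (g n).1 (g n).2).choose_spec.2

end Seq

section Workhorse

variable (X : ℝᵒᵖ ⥤ CochainComplex (ModuleCat R) ℤ)

lemma dd_eq_zero_congr (s : ℝ) (k : ℤ) {k' k'' : ℤ} (h : k' = k'') (x : Ob X s k)
    (hx : dd X s k k' x = 0) : dd X s k k'' x = 0 := by subst h; exact hx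

lemma cls_congr (s : ℝ) (j : ℤ) (a b : Ob X s j) (hab : a = b)
    (ha : dd X s j (j+1) a = 0) (hb : dd X s j (j+1) b = 0) :
    cls X s j a ha = cls X s j b hb := by subst hab; rfl

variable
  (hsur : ∀ (k : ℤ) (r s : ℝ) (h : r ≤ s), Function.Surjective (res X h k))
  (hlim : ∀ (k : ℤ) (s : ℝ), IsIso (limit.lift (restrictLT (componentFunctor X k) s)
        (coneLT (componentFunctor X k) s)))

section ChainFam

variable {X} (j : ℤ) (c : ℝ) (F : ∀ n : ℕ, Ob X (seq c n) j)
  (hF : ∀ n : ℕ, res X (seq_mono c (Nat.le_succ n)) j (F (n+1)) = F n)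

include hF

lemma chain_res : ∀ {n m : ℕ} (h : n ≤ m), res X (seq_mono c h) j (F m) = F n := by
  intro n m h
  induction m, h using Nat.le_induction with
  | base => exact res_refl X j (F n)
  | succ m hm ih =>
    rw [← ih, ← hF m]
    exact (res_res X (seq_mono c hm) (seq_mono c (Nat.le_succ m)) j (F (m+1))).symm

/-- Extend a compatible chain along `seq c` to a compatible family on `(-∞, c)`. -/
lemma chain_to_family :
    ∃ fam : ∀ u : ℝ, u < c → Ob X u j,
      (∀ (u u' : ℝ) (hu : u < c) (hu' : u' < c) (huu' : u ≤ u'),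
        res X huu' j (fam u' hu') = fam u hu) ∧
      (∀ (u : ℝ) (hu : u < c) (n : ℕ) (hn : u ≤ seq c n),
        fam u hu = res X hn j (F n)) := by
  have key : ∀ (u : ℝ) (n m : ℕ) (hn : u ≤ seq c n) (hm : u ≤ seq c m),
      res X hn j (F n) = res X hm j (F m) := by
    intro u n m hn hm
    rcases le_total n m with hnm | hnm
    · rw [show F n = res X (seq_mono c hnm) j (F m) from (chain_res j c F hF hnm).symm,
        res_res]
    · rw [show F m = res X (seq_mono c hnm) j (F n) from (chain_res j c F hF hnm).symm,
        res_res]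
  refine ⟨fun u hu => res X (exists_seq_ge c u hu).choose_spec j
    (F (exists_seq_ge c u hu).choose), ?_, ?_⟩
  · intro u u' hu hu' huu'
    set n := (exists_seq_ge c u hu).choose with hn
    set n' := (exists_seq_ge c u' hu').choose with hn'
    have h1 : u ≤ seq c n' := le_trans huu' (exists_seq_ge c u' hu').choose_spec
    rw [res_res]
    exact key u n' n h1 (exists_seq_ge c u hu).choose_spec
  · intro u hu n hn
    exact key u (exists_seq_ge c u hu).choose n (exists_seq_ge c u hu).choose_spec hn

end ChainFam

include hsur hlim in
/-- W1: a compatible family of cohomology classes below `c` lifts to a class at `c`. -/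
lemma family_lift (j : ℤ) (c : ℝ) (f : ∀ u : ℝ, u < c → Hq X u j)
    (hf : ∀ (u u' : ℝ) (hu : u < c) (hu' : u' < c) (huu' : u ≤ u'),
      hres X huu' j (f u' hu') = f u hu) :
    ∃ (ξ : Ob X c j) (hξ : dd X c j (j+1) ξ = 0), ∀ (u : ℝ) (hu : u < c),
      hres X hu.le j (cls X c j ξ hξ) = f u hu := by
  -- build a compatible chain of cocycle representatives along `seq c`
  obtain ⟨F, hQ, hR⟩ := exists_chain
    (α := fun n => Ob X (seq c n) j)
    (fun n x => ∃ hx : dd X (seq c n) j (j+1) x = 0,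
      cls X (seq c n) j x hx = f (seq c n) (seq_lt c n))
    (fun n a b => res X (seq_mono c (Nat.le_succ n)) j b = a)
    (by
      obtain ⟨x, hx, hx2⟩ := cls_surjective X (seq c 0) j (f (seq c 0) (seq_lt c 0))
      exact ⟨x, hx, hx2.symm⟩)
    (by
      rintro n a ⟨ha, hacls⟩
      obtain ⟨y, hy, hy2⟩ := cls_surjective X (seq c (n+1)) j (f (seq c (n+1)) (seq_lt c (n+1)))
      have hstepcls : cls X (seq c n) j (res X (seq_mono c (Nat.le_succ n)) j y)
          (by rw [res_dd, hy, map_zero]) = cls X (seq c n) j a ha := by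
        rw [← hres_cls]
        rw [← hy2, hacls]
        exact hf _ _ (seq_lt c n) (seq_lt c (n+1)) (seq_mono c (Nat.le_succ n))
        exact hy
      obtain ⟨w, hw⟩ := (cls_eq_iff X (seq c n) j _ _ _ _).1 hstepcls
      obtain ⟨w', hw'⟩ := hsur (j-1) (seq c n) (seq c (n+1)) (seq_mono c (Nat.le_succ n)) w
      refine ⟨y - dd X (seq c (n+1)) (j-1) j w', ⟨?_, ?_⟩, ?_⟩
      · rw [map_sub, hy, dd_dd, sub_zero]
      · rw [hy2]
        apply (cls_eq_iff X (seq c (n+1)) j _ _ _ _).2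
        exact ⟨-w', by rw [map_neg]; abel⟩
      · show res X (seq_mono c (Nat.le_succ n)) j
            (y - dd X (seq c (n+1)) (j-1) j w') = a
        rw [map_sub, ← res_dd, hw', hw]
        abel)
  -- extend to a family below `c` and take the limit
  obtain ⟨fam, hfam, hfamF⟩ := chain_to_family j c F hR
  obtain ⟨ξ, hξfam⟩ := exists_of_family X j c (hlim j c) fam hfam
  have hξ : dd X c j (j+1) ξ = 0 := by
    apply eq_of_res_lt X (j+1) c (hlim (j+1) c)
    intro u hu
    rw [map_zero, ← res_dd, hξfam u hu]
    obtain ⟨n, hn⟩ := exists_seq_ge c u hu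
    rw [hfamF u hu n hn, res_dd, (hQ n).choose, map_zero]
  refine ⟨ξ, hξ, ?_⟩
  intro u hu
  obtain ⟨n, hn⟩ := exists_seq_ge c u hu
  rw [hres_cls]
  have e1 : res X hu.le j ξ = res X hn j (F n) := by rw [hξfam u hu, hfamF u hu n hn]
  rw [cls_congr X u j _ (res X hn j (F n)) e1 _ (by rw [res_dd, (hQ n).choose, map_zero])]
  rw [← hres_cls X hn j (F n) (hQ n).choose]
  rw [cls_congr X (seq c n) j (F n) (F n) rfl (hQ n).choose ((hQ n).choose)]
  rw [(hQ n).choose_spec]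
  exact hf u (seq c n) hu (seq_lt c n) hn

include hsur hlim in
/-- W2: a cocycle at `c` whose class vanishes below `c` has vanishing class at `c`,
provided enough surjectivity in degree `j-1`. -/
lemma family_primitive (j : ℤ)
    (hsurH : ∀ (u u' : ℝ) (h : u ≤ u'), Function.Surjective (hres X h (j-1)))
    (c : ℝ) (z : Ob X c j) (hz : dd X c j (j+1) z = 0)
    (hvan : ∀ (u : ℝ) (hu : u < c), hres X hu.le j (cls X c j z hz) = 0) :
    cls X c j z hz = 0 := by
  have hj1 : j - 1 + 1 = j := by ring
  -- primitives exist below c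
  have hprim : ∀ (u : ℝ) (hu : u < c), ∃ w : Ob X u (j-1),
      dd X u (j-1) j w = res X hu.le j z := by
    intro u hu
    have h0 : cls X u j (res X hu.le j z) (by rw [res_dd, hz, map_zero]) = 0 := by
      rw [← hres_cls]; exact hvan u hu
    exact (cls_eq_zero_iff X u j _ _).1 h0
  -- build a compatible chain of primitives along `seq c`
  obtain ⟨F, hQ, hR⟩ := exists_chain
    (α := fun n => Ob X (seq c n) (j-1))
    (fun n w => dd X (seq c n) (j-1) j w = res X (seq_lt c n).le j z)
    (fun n a b => res X (seq_mono c (Nat.le_succ n)) (j-1) b = a)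
    (hprim (seq c 0) (seq_lt c 0))
    (by
      intro n a ha
      obtain ⟨v, hv⟩ := hprim (seq c (n+1)) (seq_lt c (n+1))
      set q : Ob X (seq c n) (j-1) := res X (seq_mono c (Nat.le_succ n)) (j-1) v - a with hq
      have hqc : dd X (seq c n) (j-1) j q = 0 := by
        rw [hq, map_sub, res_dd, hv, res_res, ha, sub_self]
      have hqc' : dd X (seq c n) (j-1) (j-1+1) q = 0 := by rw [hj1]; exact hqc
      obtain ⟨Y, hY⟩ := hsurH (seq c n) (seq c (n+1)) (seq_mono c (Nat.le_succ n))
        (cls X (seq c n) (j-1) q hqc')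
      obtain ⟨ζ, hζ, hζ2⟩ := cls_surjective X (seq c (n+1)) (j-1) Y
      have hζj : dd X (seq c (n+1)) (j-1) j ζ = 0 :=
        dd_eq_zero_congr X (seq c (n+1)) (j-1) hj1 ζ hζ
      have hresζ : cls X (seq c n) (j-1)
          (res X (seq_mono c (Nat.le_succ n)) (j-1) ζ) (by rw [res_dd, hζ, map_zero])
          = cls X (seq c n) (j-1) q hqc' := by
        rw [← hres_cls, ← hζ2]; exact hY
        exact hζ
      obtain ⟨w2, hw2⟩ := (cls_eq_iff X (seq c n) (j-1) _ _ _ _).1 hresζ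
      obtain ⟨w2', hw2'⟩ := hsur (j-1-1) (seq c n) (seq c (n+1))
        (seq_mono c (Nat.le_succ n)) w2
      refine ⟨v - ζ + dd X (seq c (n+1)) (j-1-1) (j-1) w2', ?_, ?_⟩
      · show dd X (seq c (n+1)) (j-1) j
            (v - ζ + dd X (seq c (n+1)) (j-1-1) (j-1) w2') = res X (seq_lt c (n+1)).le j z
        rw [map_add, map_sub, hv, hζj, dd_dd, sub_zero, add_zero]
      · show res X (seq_mono c (Nat.le_succ n)) (j-1)
            (v - ζ + dd X (seq c (n+1)) (j-1-1) (j-1) w2') = a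
        rw [map_add, map_sub, ← res_dd, hw2', hw2, hq]
        abel
    )
  -- extend to a family below `c` and take the limit
  obtain ⟨fam, hfam, hfamF⟩ := chain_to_family (j-1) c F hR
  obtain ⟨w, hwfam⟩ := exists_of_family X (j-1) c (hlim (j-1) c) fam hfam
  have hdw : dd X c (j-1) j w = z := by
    apply eq_of_res_lt X j c (hlim j c)
    intro u hu
    rw [← res_dd, hwfam u hu]
    obtain ⟨n, hn⟩ := exists_seq_ge c u hu
    rw [hfamF u hu n hn, res_dd, hQ n, res_res]
  exact (cls_eq_zero_iff X c j z hz).2 ⟨w, hdw⟩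

end Workhorse

section Main

variable (X : ℝᵒᵖ ⥤ CochainComplex (ModuleCat R) ℤ)
  (hsur : ∀ (k : ℤ) (r s : ℝ) (h : r ≤ s), Function.Surjective (res X h k))
  (hlim : ∀ (k : ℤ) (s : ℝ), IsIso (limit.lift (restrictLT (componentFunctor X k) s)
        (coneLT (componentFunctor X k) s)))
  (hcolim : ∀ (j : ℤ) (s : ℝ),
      IsIso (colimit.desc (restrictGT (cohomologyFunctor X j) s)
        (coconeGT (cohomologyFunctor X j) s)))

include hsur hlim hcolim in
theorem hres_surjective_all (j : ℤ) {s t : ℝ} (hst : s ≤ t) :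
    Function.Surjective (hres X hst j) := by
  classical
  intro x
  -- the collection of compatible partial families of classes over down-closed
  -- subsets of `[s, t]` extending `x`
  set Fam : Set (Set (Σ u : ℝ, (Hq X u j : Type))) :=
    {S | (⟨s, x⟩ : Σ u : ℝ, (Hq X u j : Type)) ∈ S ∧
      (∀ p ∈ S, s ≤ p.1 ∧ p.1 ≤ t) ∧
      (∀ p ∈ S, ∀ q ∈ S, ∀ hpq : p.1 ≤ q.1, hres X hpq j q.2 = p.2) ∧
      (∀ p ∈ S, ∀ u : ℝ, s ≤ u → u ≤ p.1 → ∃ q ∈ S, q.1 = u)} with hFamdef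
  have hsingle : ({⟨s, x⟩} : Set (Σ u : ℝ, (Hq X u j : Type))) ∈ Fam := by
    refine ⟨Set.mem_singleton _, ?_, ?_, ?_⟩
    · intro p hp
      rw [Set.mem_singleton_iff] at hp
      subst hp
      exact ⟨le_refl s, hst⟩
    · intro p hp q hq hpq
      rw [Set.mem_singleton_iff] at hp hq
      subst hp; subst hq
      exact hres_refl X j x
    · intro p hp u hsu hup
      rw [Set.mem_singleton_iff] at hp
      subst hp
      exact ⟨⟨s, x⟩, Set.mem_singleton _, le_antisymm hsu hup⟩
  obtain ⟨M, hMsub, hMmax⟩ := zorn_subset_nonempty Fam (by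
    intro c hcsub hchain hcne
    refine ⟨⋃₀ c, ?_, fun S hS => Set.subset_sUnion_of_mem hS⟩
    obtain ⟨S0, hS0⟩ := hcne
    refine ⟨⟨S0, hS0, (hcsub hS0).1⟩, ?_, ?_, ?_⟩
    · rintro p ⟨S, hS, hpS⟩
      exact (hcsub hS).2.1 p hpS
    · rintro p ⟨S, hS, hpS⟩ q ⟨S', hS', hqS'⟩ hpq
      rcases hchain.total hS hS' with hss | hss
      · exact (hcsub hS').2.2.1 p (hss hpS) q hqS' hpq
      · exact (hcsub hS).2.2.1 p hpS q (hss hqS') hpq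
    · rintro p ⟨S, hS, hpS⟩ u hsu hup
      obtain ⟨q, hq, hq1⟩ := (hcsub hS).2.2.2 p hpS u hsu hup
      exact ⟨q, ⟨S, hS, hq⟩, hq1⟩) _ hsingle
  obtain ⟨hMbase, hMbd, hMcompat, hMdown⟩ := hMmax.1
  -- the domain of the maximal family
  set D : Set ℝ := {u : ℝ | ∃ y : Hq X u j, (⟨u, y⟩ : Σ u : ℝ, (Hq X u j : Type)) ∈ M}
    with hDdef
  have hsD : s ∈ D := ⟨x, hMbase⟩
  have hDne : D.Nonempty := ⟨s, hsD⟩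
  have hDle : ∀ u ∈ D, u ≤ t := by
    rintro u ⟨y, hy⟩
    exact (hMbd _ hy).2
  have hDbdd : BddAbove D := ⟨t, fun u hu => hDle u hu⟩
  have hDdc : ∀ v ∈ D, ∀ u : ℝ, s ≤ u → u ≤ v → u ∈ D := by
    rintro v ⟨y, hy⟩ u hsu huv
    obtain ⟨q, hqM, hq1⟩ := hMdown ⟨v, y⟩ hy u hsu huv
    rcases q with ⟨u', y'⟩
    cases hq1
    exact ⟨y', hqM⟩
  have hUniq : ∀ (u : ℝ) (y y' : Hq X u j),
      (⟨u, y⟩ : Σ u : ℝ, (Hq X u j : Type)) ∈ M →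
      (⟨u, y'⟩ : Σ u : ℝ, (Hq X u j : Type)) ∈ M → y = y' := by
    intro u y y' hy hy'
    have h2 := hMcompat ⟨u, y⟩ hy ⟨u, y'⟩ hy' (le_refl u)
    rw [hres_refl X j y'] at h2
    exact h2.symm
  set cs : ℝ := sSup D with hcsdef
  have hscs : s ≤ cs := le_csSup hDbdd hsD
  have hcst : cs ≤ t := csSup_le hDne hDle
  by_cases hcsD : cs ∈ D
  · obtain ⟨ystar, hystar⟩ := hcsD
    by_cases hts : t ≤ cs
    · -- done: restrict the class at `cs ≥ t` to `t`
      refine ⟨hres X hts j ystar, ?_⟩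
      rw [hres_hres]
      exact hMcompat ⟨s, x⟩ hMbase ⟨cs, ystar⟩ hystar (hst.trans hts)
    · exfalso
      have hcs_lt : cs < t := lt_of_not_ge hts
      -- extend the maximal family to the right of `cs` using h3
      obtain ⟨t', ht', y', hy'⟩ := exists_lift_class X j cs (hcolim j cs) ystar
      set c' : ℝ := min t' t with hc'def
      have hcsc' : cs < c' := lt_min ht' hcs_lt
      have hc't : c' ≤ t := min_le_right _ _
      set y'' : Hq X c' j := hres X (min_le_left t' t) j y' with hy''def
      have hy''cs : hres X hcsc'.le j y'' = ystar := by
        rw [hy''def, hres_hres]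
        exact hy'
      set S' : Set (Σ u : ℝ, (Hq X u j : Type)) :=
        M ∪ {p | ∃ (hu1 : cs < p.1) (hu2 : p.1 ≤ c'), p.2 = hres X hu2 j y''} with hS'def
      have hS'Fam : S' ∈ Fam := by
        refine ⟨Or.inl hMbase, ?_, ?_, ?_⟩
        · rintro p (hp | ⟨hu1, hu2, _⟩)
          · exact hMbd p hp
          · exact ⟨hscs.trans hu1.le, hu2.trans hc't⟩
        · rintro p (hp | ⟨hp1, hp2, hp3⟩) q (hq | ⟨hq1, hq2, hq3⟩) hpq
          · exact hMcompat p hp q hq hpq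
          · -- p in M, q new
            have hp1cs : p.1 ≤ cs := le_csSup hDbdd ⟨p.2, hp⟩
            rw [hq3, hres_hres,
              ← hres_hres X hp1cs hcsc'.le j y'', hy''cs]
            exact hMcompat p hp ⟨cs, ystar⟩ hystar hp1cs
          · -- p new, q in M: impossible
            exact absurd ((hp1.trans_le hpq).trans_le (le_csSup hDbdd ⟨q.2, hq⟩))
              (lt_irrefl cs)
          · -- both new
            rw [hq3, hres_hres, hp3]
        · rintro p (hp | ⟨hp1, hp2, _⟩) u hsu hup
          · obtain ⟨q, hq, hq1⟩ := hMdown p hp u hsu hup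
            exact ⟨q, Or.inl hq, hq1⟩
          · by_cases hucs : u ≤ cs
            · obtain ⟨q, hq, hq1⟩ := hMdown ⟨cs, ystar⟩ hystar u hsu hucs
              exact ⟨q, Or.inl hq, hq1⟩
            · refine ⟨⟨u, hres X (hup.trans hp2) j y''⟩,
                Or.inr ⟨lt_of_not_ge hucs, hup.trans hp2, rfl⟩, rfl⟩
      have hS'sub : S' ⊆ M := hMmax.2 hS'Fam Set.subset_union_left
      have hnew : (⟨c', hres X (le_refl c') j y''⟩ : Σ u : ℝ, (Hq X u j : Type)) ∈ S' :=
        Or.inr ⟨hcsc', le_refl c', rfl⟩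
      have : c' ∈ D := ⟨_, hS'sub hnew⟩
      exact absurd (le_csSup hDbdd this) (not_le.2 hcsc')
  · exfalso
    -- cs ∉ D : build a compatible family below cs and extend via W1
    have hscs_lt : s < cs := lt_of_le_of_ne hscs (fun h => hcsD (h ▸ hsD))
    have hbelow : ∀ u : ℝ, s ≤ u → u < cs → u ∈ D := by
      intro u hsu hucs
      obtain ⟨v, hvD, huv⟩ := exists_lt_of_lt_csSup hDne hucs
      exact hDdc v hvD u hsu huv.le
    have hvalM : ∀ (u : ℝ) (hu : u ∈ D),
        (⟨u, hu.choose⟩ : Σ u : ℝ, (Hq X u j : Type)) ∈ M := fun u hu => hu.choose_spec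
    set f : ∀ u : ℝ, u < cs → Hq X u j := fun u hu =>
      if hsu : s ≤ u then (hbelow u hsu hu).choose
      else hres X (le_of_not_ge hsu) j x with hfdef
    have hf : ∀ (u u' : ℝ) (hu : u < cs) (hu' : u' < cs) (huu' : u ≤ u'),
        hres X huu' j (f u' hu') = f u hu := by
      intro u u' hu hu' huu'
      by_cases hsu : s ≤ u
      · have hsu' : s ≤ u' := hsu.trans huu'
        rw [hfdef]
        simp only [dif_pos hsu, dif_pos hsu']
        exact hMcompat ⟨u, (hbelow u hsu hu).choose⟩ (hvalM u (hbelow u hsu hu))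
          ⟨u', (hbelow u' hsu' hu').choose⟩ (hvalM u' (hbelow u' hsu' hu')) huu'
      · by_cases hsu' : s ≤ u'
        · rw [hfdef]
          simp only [dif_neg hsu, dif_pos hsu']
          rw [← hres_hres X (le_of_not_ge hsu) hsu' j]
          congr 1
          exact hMcompat ⟨s, x⟩ hMbase ⟨u', (hbelow u' hsu' hu').choose⟩
            (hvalM u' (hbelow u' hsu' hu')) hsu'
        · rw [hfdef]
          simp only [dif_neg hsu, dif_neg hsu']
          rw [hres_hres]
    obtain ⟨ξ, hξ, hclsf⟩ := family_lift X hsur hlim j cs f hf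
    set S' : Set (Σ u : ℝ, (Hq X u j : Type)) :=
      M ∪ {(⟨cs, cls X cs j ξ hξ⟩ : Σ u : ℝ, (Hq X u j : Type))} with hS'def
    have hS'Fam : S' ∈ Fam := by
      refine ⟨Or.inl hMbase, ?_, ?_, ?_⟩
      · rintro p (hp | hp)
        · exact hMbd p hp
        · rw [Set.mem_singleton_iff] at hp
          subst hp
          exact ⟨hscs, hcst⟩
      · rintro p (hp | hp) q (hq | hq) hpq
        · exact hMcompat p hp q hq hpq
        · -- p in M, q = new point at cs
          rw [Set.mem_singleton_iff] at hq
          subst hq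
          have hp1cs : p.1 ≤ cs := le_csSup hDbdd ⟨p.2, hp⟩
          have hp1lt : p.1 < cs := lt_of_le_of_ne hp1cs (fun h => hcsD (h ▸ ⟨p.2, hp⟩))
          have hsp1 : s ≤ p.1 := (hMbd p hp).1
          have h5 := hclsf p.1 hp1lt
          rw [hfdef] at h5
          simp only [dif_pos hsp1] at h5
          have h6 : hres X hpq j (cls X cs j ξ hξ) = (hbelow p.1 hsp1 hp1lt).choose := h5
          rw [h6]
          exact hUniq p.1 _ _ (hvalM p.1 (hbelow p.1 hsp1 hp1lt)) hp
        · -- p = new, q in M : impossible since q.1 ≤ cs ≤ q.1 forces q.1 = cs ∈ D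
          rw [Set.mem_singleton_iff] at hp
          subst hp
          have hq1cs : q.1 ≤ cs := le_csSup hDbdd ⟨q.2, hq⟩
          have : q.1 = cs := le_antisymm hq1cs hpq
          exact absurd (this ▸ (⟨q.2, hq⟩ : q.1 ∈ D)) hcsD
        · rw [Set.mem_singleton_iff] at hp hq
          subst hp; subst hq
          exact hres_refl X j _
      · rintro p (hp | hp) u hsu hup
        · obtain ⟨q, hq, hq1⟩ := hMdown p hp u hsu hup
          exact ⟨q, Or.inl hq, hq1⟩
        · rw [Set.mem_singleton_iff] at hp
          subst hp
          rcases eq_or_lt_of_le hup with heq | hlt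
          · exact ⟨⟨cs, cls X cs j ξ hξ⟩, Or.inr (Set.mem_singleton _), heq.symm⟩
          · obtain ⟨y, hy⟩ := hbelow u hsu hlt
            exact ⟨⟨u, y⟩, Or.inl hy, rfl⟩
    have hS'sub : S' ⊆ M := hMmax.2 hS'Fam Set.subset_union_left
    have : cs ∈ D := ⟨_, hS'sub (Or.inr (Set.mem_singleton _))⟩
    exact hcsD this

end Main

section Main2

variable (X : ℝᵒᵖ ⥤ CochainComplex (ModuleCat R) ℤ)
  (hsur : ∀ (k : ℤ) (r s : ℝ) (h : r ≤ s), Function.Surjective (res X h k))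
  (hlim : ∀ (k : ℤ) (s : ℝ), IsIso (limit.lift (restrictLT (componentFunctor X k) s)
        (coneLT (componentFunctor X k) s)))
  (hcolim : ∀ (j : ℤ) (s : ℝ),
      IsIso (colimit.desc (restrictGT (cohomologyFunctor X j) s)
        (coconeGT (cohomologyFunctor X j) s)))

include hsur hlim hcolim in
theorem hres_injective_all (j : ℤ) {s t : ℝ} (hst : s ≤ t) :
    Function.Injective (hres X hst j) := by
  rw [injective_iff_map_eq_zero]
  intro y hy
  -- the set where the restriction of `y` vanishes
  set T : Set ℝ := {u : ℝ | ∃ (h1 : s ≤ u) (h2 : u ≤ t), hres X h2 j y = 0} with hTdef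
  have hsT : s ∈ T := ⟨le_refl s, hst, hy⟩
  have hTne : T.Nonempty := ⟨s, hsT⟩
  have hTle : ∀ u ∈ T, u ≤ t := by
    rintro u ⟨h1, h2, _⟩
    exact h2
  have hTbdd : BddAbove T := ⟨t, fun u hu => hTle u hu⟩
  have hTdc : ∀ v ∈ T, ∀ u : ℝ, s ≤ u → u ≤ v → u ∈ T := by
    rintro v ⟨hv1, hv2, hv3⟩ u hsu huv
    refine ⟨hsu, huv.trans hv2, ?_⟩
    rw [← hres_hres X huv hv2 j y, hv3, map_zero]
  set cs : ℝ := sSup T with hcsdef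
  have hscs : s ≤ cs := le_csSup hTbdd hsT
  have hcst : cs ≤ t := csSup_le hTne hTle
  -- the restriction of `y` to `cs` vanishes, via W2
  have hcsT : hres X hcst j y = 0 := by
    obtain ⟨η, hη, hηcls⟩ := cls_surjective X t j y
    have hz : dd X cs j (j+1) (res X hcst j η) = 0 := by rw [res_dd, hη, map_zero]
    have hclsz : cls X cs j (res X hcst j η) hz = hres X hcst j y := by
      rw [hηcls, hres_cls]
    have hvan : ∀ (u : ℝ) (hu : u < cs),
        hres X hu.le j (cls X cs j (res X hcst j η) hz) = 0 := by
      intro u hu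
      rw [hclsz, hres_hres]
      by_cases hsu : s ≤ u
      · obtain ⟨v, hvT, huv⟩ := exists_lt_of_lt_csSup hTne hu
        obtain ⟨hu1, hu2, hu3⟩ := hTdc v hvT u hsu huv.le
        exact hu3
      · have h4 : u ≤ s := le_of_not_ge hsu
        rw [← hres_hres X h4 hst j y, hy, map_zero]
    have := family_primitive X hsur hlim j
      (fun u u' h => hres_surjective_all X hsur hlim hcolim (j-1) h)
      cs (res X hcst j η) hz hvan
    rw [← hclsz, this]
  -- cs must equal t, otherwise h3 pushes the vanishing strictly above cs
  rcases eq_or_lt_of_le hcst with heq | hlt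
  · have h5 := hres_hres X heq.ge hcst j y
    rw [hcsT, map_zero] at h5
    rw [← hres_refl X j y]
    exact h5.symm
  · exfalso
    obtain ⟨u, hu1, hu2, hu3⟩ := vanish_up X j cs (hcolim j cs) t hlt y hcsT
    have : u ∈ T := ⟨hscs.trans hu1.le, hu2, hu3⟩
    exact absurd (le_csSup hTbdd this) (not_le.2 hu1)

end Main2

section Final

theorem cohomology_constant' {R : Type} [Ring R]
    (X : ℝᵒᵖ ⥤ CochainComplex (ModuleCat R) ℤ)
    (h1 : ∀ (k : ℤ) (r s : ℝ) (h : r ≤ s),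
      Function.Surjective ((componentFunctor X k).map (homOfLE h).op))
    (h2 : ∀ (k : ℤ) (s : ℝ),
      IsIso (limit.lift (restrictLT (componentFunctor X k) s)
        (coneLT (componentFunctor X k) s)))
    (h3 : ∀ (j : ℤ) (s : ℝ),
      IsIso (colimit.desc (restrictGT (cohomologyFunctor X j) s)
        (coconeGT (cohomologyFunctor X j) s))) :
    ∀ (j : ℤ) (r s : ℝ) (h : r ≤ s),
      IsIso ((cohomologyFunctor X j).map (homOfLE h).op) := by
  intro j r s h
  have hsur : ∀ (k : ℤ) (r s : ℝ) (h : r ≤ s), Function.Surjective (res X h k) :=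
    fun k r s h => h1 k r s h
  rw [ConcreteCategory.isIso_iff_bijective]
  exact ⟨hres_injective_all X hsur h2 h3 j h, hres_surjective_all X hsur h2 h3 j h⟩

end Final

end KSdev

/-- Kashiwara's criterion for projective systems of unbounded cochain complexes of
`R`-modules: if (1) all degreewise transition maps `X_s^k → X_r^k` are surjective,
(2) `X_s^k → lim_{r<s} X_r^k` is an isomorphism for all `k`, `s`, and
(3) `colim_{t>s} H^j(X_t) → H^j(X_s)` is an isomorphism for all `j`, `s`, then all the
maps `H^j(X_s) → H^j(X_r)` (for `r ≤ s`) are isomorphisms, i.e. `H^j(X)` is constant. -/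
theorem cohomology_constant {R : Type} [Ring R]
    (X : ℝᵒᵖ ⥤ CochainComplex (ModuleCat R) ℤ)
    (h1 : ∀ (k : ℤ) (r s : ℝ) (h : r ≤ s),
      Function.Surjective ((componentFunctor X k).map (homOfLE h).op))
    (h2 : ∀ (k : ℤ) (s : ℝ),
      IsIso (limit.lift (restrictLT (componentFunctor X k) s)
        (coneLT (componentFunctor X k) s)))
    (h3 : ∀ (j : ℤ) (s : ℝ),
      IsIso (colimit.desc (restrictGT (cohomologyFunctor X j) s)
        (coconeGT (cohomologyFunctor X j) s))) :
    ∀ (j : ℤ) (r s : ℝ) (h : r ≤ s),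
      IsIso ((cohomologyFunctor X j).map (homOfLE h).op) := by
  exact KSdev.cohomology_constant' X h1 h2 h3
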